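/- There is a constant C ≥ 1 depending only on d and M such that for all x, y ∈ E(ω) with x = Π(𝚒), y = Π(𝚓), writing 𝚔 = 𝚒 ∧ 𝚓 for the longest common prefix and 𝚒 = 𝚔𝚒', 𝚓 = 𝚔𝚓', one has C^{-1} M^{|𝚔|−|𝚔̃|}|x−y| ≤ |f(x)−f(y)| ≤ C M^{|𝚔|−|𝚔̃|}|x−y|; moreover M^{−|𝚔̃|}|Π(𝚒')−Π(𝚓')| = M^{|𝚔|−|𝚔̃|}|x−y|. -/

import Mathlib

open MeasureTheory ProbabilityTheory Set Filter
open scoped ENNReal NNReal Topology Classical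

noncomputable section

namespace FractalPercolation

/-! ### Words -/

/-- The finite word `𝚒|_n` obtained by truncating an infinite word. -/
def wordTake (d M : ℕ) (i : ℕ → Fin (M ^ d)) (n : ℕ) : List (Fin (M ^ d)) :=
  List.ofFn fun k : Fin n => i k

/-- The shift `σ^n 𝚒` of an infinite word. -/
def shiftW (d M : ℕ) (n : ℕ) (i : ℕ → Fin (M ^ d)) : ℕ → Fin (M ^ d) := fun t => i (n + t)

/-- The concatenation `𝚠𝚖` of a finite word with an infinite word. -/
def extendW (d M : ℕ) (w : List (Fin (M ^ d))) (m : ℕ → Fin (M ^ d)) : ℕ → Fin (M ^ d) :=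
  fun t => if h : t < w.length then w.get ⟨t, h⟩ else m (t - w.length)

/-! ### Geometry: cubes and the natural projection -/

/-- Lower-left corner of the `M`-adic cube labelled by the finite word `w`; the labelling
`lab` sends a symbol to the vector of integer offsets (in `{0,…,M-1}^d`) of the corresponding
subcube. -/
def corner (d M : ℕ) (lab : Fin (M ^ d) → Fin d → Fin M) :
    List (Fin (M ^ d)) → Fin d → ℝ
  | [] => fun _ => 0
  | i :: w => fun k => ((lab i k : ℝ) + corner d M lab w k) / (M : ℝ)

/-- The closed `M`-adic cube `Q_𝚠 ⊆ [0,1]^d` labelled by the finite word `w`. -/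
def cube (d M : ℕ) (lab : Fin (M ^ d) → Fin d → Fin M) (w : List (Fin (M ^ d))) :
    Set (Fin d → ℝ) :=
  {x | ∀ k, corner d M lab w k ≤ x k ∧ x k ≤ corner d M lab w k + ((M : ℝ) ^ w.length)⁻¹}

/-- The homothety `h_{Q_𝚠}` sending `[0,1]^d` onto `Q_𝚠`. -/
def hQ (d M : ℕ) (lab : Fin (M ^ d) → Fin d → Fin M) (w : List (Fin (M ^ d)))
    (y : Fin d → ℝ) : Fin d → ℝ :=
  fun k => corner d M lab w k + ((M : ℝ) ^ w.length)⁻¹ * y k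

/-- The natural projection `Π : Λ^ℕ → [0,1]^d`, `{Π(𝚒)} = ⋂_n Q_{𝚒|_n}`. -/
def PiInf (d M : ℕ) (lab : Fin (M ^ d) → Fin d → Fin M) (i : ℕ → Fin (M ^ d)) :
    Fin d → ℝ :=
  fun k => ⨆ n, corner d M lab (wordTake d M i n) k

/-- The cube concentric with the cube of lower-left corner `c` and side length `ℓ`,
with side length `κ·ℓ`. -/
def concCube (d : ℕ) (c : Fin d → ℝ) (ℓ κ : ℝ) : Set (Fin d → ℝ) :=
  {x | ∀ k, c k + (1 - κ) * ℓ / 2 ≤ x k ∧ x k ≤ c k + (1 + κ) * ℓ / 2}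

/-! ### The labelling -/

/-- The set `Λ_B` of labels of subcubes meeting the boundary. -/
def LamB (d M : ℕ) : Set (Fin (M ^ d)) := {i | (i : ℕ) < M ^ d - (M - 2) ^ d}

/-- `lab` is a genuine labelling of the `M^d` subcubes such that the symbols in `Λ_B`
are exactly those of subcubes meeting the boundary of `[0,1]^d`. -/
def LabSpec (d M : ℕ) (lab : Fin (M ^ d) → Fin d → Fin M) : Prop :=
  Function.Bijective lab ∧
    ∀ i, i ∈ LamB d M ↔ ∃ k, (lab i k : ℕ) = 0 ∨ (lab i k : ℕ) = M - 1

/-! ### The percolation process -/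

/-- The finite word `w` survives (i.e. `w ∈ T_{|w|}(ω)`): all its nonempty prefixes
are retained. -/
def Alive (d M : ℕ) {Ω : Type*} (X : List (Fin (M ^ d)) → Ω → Bool) (ω : Ω)
    (w : List (Fin (M ^ d))) : Prop :=
  ∀ u : List (Fin (M ^ d)), u ≠ [] → u <+: w → X u ω = true

/-- The infinite word `𝚒` survives, i.e. `𝚒 ∈ T(ω)`. -/
def TInf (d M : ℕ) {Ω : Type*} (X : List (Fin (M ^ d)) → Ω → Bool) (ω : Ω)
    (i : ℕ → Fin (M ^ d)) : Prop :=
  ∀ n, Alive d M X ω (wordTake d M i n)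

/-- The fractal percolation set `E(ω) = Π(T(ω))`. -/
def Eset (d M : ℕ) (lab : Fin (M ^ d) → Fin d → Fin M) {Ω : Type*}
    (X : List (Fin (M ^ d)) → Ω → Bool) (ω : Ω) : Set (Fin d → ℝ) :=
  {x | ∃ i, TInf d M X ω i ∧ PiInf d M lab i = x}

/-- `(X_𝚒)_{𝚒∈Λ^*}` are i.i.d. Bernoulli(p) random variables under `P`. -/
def PercSpec (d M : ℕ) {Ω : Type*} [MeasurableSpace Ω] (P : Measure Ω)
    (X : List (Fin (M ^ d)) → Ω → Bool) (p : ℝ) : Prop :=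
  (∀ w, Measurable (X w)) ∧
    iIndepFun X P ∧
    ∀ w, P {ω | X w ω = true} = ENNReal.ofReal p

/-- The σ-algebra `𝓑_n` generated by `{X_𝚒 : |𝚒| ≤ n}`. -/
def Bsig (d M : ℕ) {Ω : Type*} (X : List (Fin (M ^ d)) → Ω → Bool) (n : ℕ) :
    MeasurableSpace Ω :=
  ⨆ w ∈ {w : List (Fin (M ^ d)) | w.length ≤ n}, MeasurableSpace.comap (X w) ⊤

/-! ### The substitution map -/

/-- All subcubes of `Q_𝚠` meeting the boundary of `Q_𝚠` die at the next step. -/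
def BdryDead (d M : ℕ) {Ω : Type*} (X : List (Fin (M ^ d)) → Ω → Bool) (ω : Ω)
    (w : List (Fin (M ^ d))) : Prop :=
  ∀ j ∈ LamB d M, ¬ Alive d M X ω (w ++ [j])

/-- Auxiliary recursion for the substitution `𝚒 ↦ 𝚒̃`: `pfx` is the already processed
prefix of the original word. -/
def substAux (d M : ℕ) {Ω : Type*} (X : List (Fin (M ^ d)) → Ω → Bool)
    (e : List (Fin (M ^ d))) (ω : Ω) :
    List (Fin (M ^ d)) → List (Fin (M ^ d)) → List (Fin (M ^ d))
  | _, [] => []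
  | pfx, i :: rest =>
      (if BdryDead d M X ω pfx then e ++ [i] else [i]) ++
        substAux d M X e ω (pfx ++ [i]) rest

/-- The substitution `𝚠 ↦ 𝚠̃` (with substitution word `e = η`) applied to a finite word. -/
def substW (d M : ℕ) {Ω : Type*} (X : List (Fin (M ^ d)) → Ω → Bool)
    (e : List (Fin (M ^ d))) (ω : Ω) (w : List (Fin (M ^ d))) : List (Fin (M ^ d)) :=
  substAux d M X e ω ([]) w

/-- The point `Π(𝚒̃)` for an infinite word `𝚒`. -/
def PiTilde (d M : ℕ) (lab : Fin (M ^ d) → Fin d → Fin M) {Ω : Type*}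
    (X : List (Fin (M ^ d)) → Ω → Bool) (e : List (Fin (M ^ d))) (ω : Ω)
    (i : ℕ → Fin (M ^ d)) : Fin d → ℝ :=
  fun k => ⨆ n, corner d M lab (substW d M X e ω (wordTake d M i n)) k

/-- The image `F(ω) = f(E(ω))` of the substitution map. -/
def Fset (d M : ℕ) (lab : Fin (M ^ d) → Fin d → Fin M) {Ω : Type*}
    (X : List (Fin (M ^ d)) → Ω → Bool) (e : List (Fin (M ^ d))) (ω : Ω) :
    Set (Fin d → ℝ) :=
  {x | ∃ i, TInf d M X ω i ∧ PiTilde d M lab X e ω i = x}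

/-- The substitution word `e = η ∈ Λ^K` has length `K ≥ 1` and its first symbol labels
an inner cube. -/
def EtaSpec (d M K : ℕ) (e : List (Fin (M ^ d))) : Prop :=
  1 ≤ K ∧ e.length = K ∧ ∃ a l, e = a :: l ∧ a ∉ LamB d M

/-- `diam Q_𝚠 = M^{-|𝚠|}` (in the max-norm). -/
def diamQ (d M : ℕ) (w : List (Fin (M ^ d))) : ℝ := ((M : ℝ) ^ w.length)⁻¹

/-- The quantity `κ(s,K)` from the paper. -/
def kappa (d M : ℕ) (p : ℝ) (K : ℕ) (s : ℝ) : ℝ :=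
  1 - (((M : ℝ) - 2) ^ d / (M : ℝ) ^ d) * (1 - (M : ℝ) ^ (-(s * (K : ℝ)))) *
      (1 - p) ^ (M ^ d - (M - 2) ^ d)

/-- The quantity `κ' = lim_{K→∞} κ(s,K)` from the paper. -/
def kappa' (d M : ℕ) (p : ℝ) : ℝ :=
  1 - (((M : ℝ) - 2) ^ d / (M : ℝ) ^ d) * (1 - p) ^ (M ^ d - (M - 2) ^ d)

/-- The random sums `Y^t_n(ω) = Σ_{𝚒∈T_n(ω)} diam(Q_{𝚒̃})^t`. -/
def Yt (d M : ℕ) {Ω : Type*} (X : List (Fin (M ^ d)) → Ω → Bool)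
    (e : List (Fin (M ^ d))) (t : ℝ) (n : ℕ) (ω : Ω) : ℝ :=
  ∑ v : Fin n → Fin (M ^ d),
    if Alive d M X ω (List.ofFn v) then (diamQ d M (substW d M X e ω (List.ofFn v))) ^ t
    else 0

/-! ### Quasisymmetric maps -/

/-- `f` satisfies the quasisymmetry estimate with control function `η`. -/
def IsQSWith {α β : Type*} [PseudoMetricSpace α] [PseudoMetricSpace β]
    (η : ℝ≥0 → ℝ≥0) (f : α → β) : Prop :=
  ∀ x y z : α, x ≠ z →
    nndist (f x) (f y) / nndist (f x) (f z) ≤ η (nndist x y / nndist x z)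

/-- A homeomorphism is quasisymmetric if it admits a control function which is a
homeomorphism of `[0,∞)`. -/
def IsQSHomeo {α β : Type*} [MetricSpace α] [MetricSpace β] (f : α ≃ₜ β) : Prop :=
  ∃ η : ℝ≥0 ≃ₜ ℝ≥0, IsQSWith (⇑η) (⇑f)

/-! ### The auxiliary map g and the extension of f -/

/-- `g : [0,1]^d → [0,1]^d` is an `L`-bi-Lipschitz bijection of the unit cube, equal to the
identity on the boundary, mapping `I = (1-2/M)[0,1]^d` homothetically onto `(1-2/M)Q_η`. -/
def GSpec (d M K : ℕ) (lab : Fin (M ^ d) → Fin d → Fin M) (e : List (Fin (M ^ d)))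
    (L : ℝ) (g : (Fin d → ℝ) → (Fin d → ℝ)) : Prop :=
  Set.BijOn g (cube d M lab ([])) (cube d M lab ([])) ∧
    (∀ x ∈ cube d M lab ([]), ∀ y ∈ cube d M lab ([]),
      L⁻¹ * dist x y ≤ dist (g x) (g y) ∧ dist (g x) (g y) ≤ L * dist x y) ∧
    (∀ x ∈ frontier (cube d M lab ([] : List (Fin (M ^ d)))), g x = x) ∧
    (∃ v : Fin d → ℝ,
      ∀ x ∈ concCube d (fun _ => (0 : ℝ)) 1 (1 - 2 / (M : ℝ)),
        g x = ((M : ℝ) ^ K)⁻¹ • x + v) ∧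
    g '' concCube d (fun _ => (0 : ℝ)) 1 (1 - 2 / (M : ℝ)) =
      concCube d (corner d M lab e) (((M : ℝ) ^ K)⁻¹) (1 - 2 / (M : ℝ))

/-- `F` is (the coding of) the extension of the substitution map to `[0,1]^d`:
on surviving words it is the substitution map, and on a word whose largest surviving
prefix is `𝚒|_n` it is given by the two cases of the definition in the paper. -/
def ExtMapSpec (d M : ℕ) (lab : Fin (M ^ d) → Fin d → Fin M) {Ω : Type*}
    (X : List (Fin (M ^ d)) → Ω → Bool) (e : List (Fin (M ^ d)))
    (g : (Fin d → ℝ) → (Fin d → ℝ)) (ω : Ω)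
    (F : (ℕ → Fin (M ^ d)) → (Fin d → ℝ)) : Prop :=
  (∀ i, TInf d M X ω i → F i = PiTilde d M lab X e ω i) ∧
    ∀ (i : ℕ → Fin (M ^ d)) (n : ℕ),
      Alive d M X ω (wordTake d M i n) → ¬ Alive d M X ω (wordTake d M i (n + 1)) →
        ((∃ j ∈ LamB d M, Alive d M X ω (wordTake d M i n ++ [j])) →
          F i = hQ d M lab (substW d M X e ω (wordTake d M i n))
              (PiInf d M lab (shiftW d M n i))) ∧
        ((∀ j ∈ LamB d M, ¬ Alive d M X ω (wordTake d M i n ++ [j])) →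
          F i = hQ d M lab (substW d M X e ω (wordTake d M i n))
              (g (PiInf d M lab (shiftW d M n i))))


/-!
Write `𝚔 = 𝚒|_n`. Both distances factor through the cubes of `𝚔` and `𝚔̃`:
`|x - y| = M^{-n} |Π(σⁿ𝚒) - Π(σⁿ𝚓)|` and `|f x - f y| = M^{-|𝚔̃|} ρ |A - B|`, where
`ρ ∈ {1, M^{-K}}` accounts for a substitution at level `n` and `A`, `B` are the points coded by
the substituted tails, which still start with the distinct letters `i_n ≠ j_n`. Up to the first
later level `q` at which either word is substituted, the tails coincide with `σⁿ𝚒`, `σⁿ𝚓`.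
At that level the substituted word continues into an inner subcube both before substitution
(its surviving next letter is inner, since all boundary children died) and after it (`η`
starts with an inner letter). A point of an inner subcube of a level-`q` cube is at distance
at least `M^{-q-1}` from every other level-`q` cube, while passing from `Π(σⁿ𝚒), Π(σⁿ𝚓)` to
`A, B` moves each point by at most `M^{-q}`; hence `|A - B|` and `|Π(σⁿ𝚒) - Π(σⁿ𝚓)|` agree up
to the factor `2M + 1`.
-/

variable {d M : ℕ} {lab : Fin (M ^ d) → Fin d → Fin M}

lemma length_wordTake (i : ℕ → Fin (M ^ d)) (n : ℕ) : (wordTake d M i n).length = n := by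
  simp [wordTake]

lemma wordTake_succ (i : ℕ → Fin (M ^ d)) (n : ℕ) :
    wordTake d M i (n + 1) = wordTake d M i n ++ [i n] := by
  rw [wordTake, List.ofFn_succ']
  simp [wordTake, Fin.last, List.concat_eq_append]

lemma wordTake_add (i : ℕ → Fin (M ^ d)) (m t : ℕ) :
    wordTake d M i (m + t) = wordTake d M i m ++ wordTake d M (shiftW d M m i) t := by
  induction t with
  | zero => simp [wordTake]
  | succ t ih => rw [← add_assoc, wordTake_succ, ih, wordTake_succ, List.append_assoc]; rfl

lemma shiftW_one_shiftW (n : ℕ) (i : ℕ → Fin (M ^ d)) :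
    shiftW d M 1 (shiftW d M n i) = shiftW d M (n + 1) i :=
  funext fun t => congrArg i (by omega)

lemma wordTake_shiftW_succ (i : ℕ → Fin (M ^ d)) (n N : ℕ) :
    wordTake d M (shiftW d M n i) (N + 1) = i n :: wordTake d M (shiftW d M (n + 1) i) N := by
  rw [add_comm, wordTake_add, shiftW_one_shiftW]
  rfl

lemma hQ_eq (w : List (Fin (M ^ d))) (y : Fin d → ℝ) :
    hQ d M lab w y = corner d M lab w + ((M : ℝ) ^ w.length)⁻¹ • y := rfl

lemma hQ_nil (y : Fin d → ℝ) : hQ d M lab [] y = y := by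
  funext k
  simp only [hQ, corner, List.length_nil, pow_zero, inv_one, one_mul, zero_add]

lemma continuous_hQ (w : List (Fin (M ^ d))) : Continuous (hQ d M lab w) := by
  show Continuous fun y => corner d M lab w + ((M : ℝ) ^ w.length)⁻¹ • y
  fun_prop

lemma dist_hQ (w : List (Fin (M ^ d))) (x y : Fin d → ℝ) :
    dist (hQ d M lab w x) (hQ d M lab w y) = ((M : ℝ) ^ w.length)⁻¹ * dist x y := by
  rw [hQ_eq, hQ_eq, dist_add_left, dist_smul₀, Real.norm_of_nonneg (by positivity)]

lemma corner_append (u v : List (Fin (M ^ d))) :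
    corner d M lab (u ++ v) = hQ d M lab u (corner d M lab v) := by
  induction u with
  | nil => exact (hQ_nil _).symm
  | cons a u ih =>
    ext k
    simp only [List.cons_append, corner, ih, hQ, List.length_cons, pow_succ, mul_inv]
    ring

lemma corner_nonneg (w : List (Fin (M ^ d))) (k : Fin d) : 0 ≤ corner d M lab w k := by
  induction w with
  | nil => simp [corner]
  | cons a w ih => simp only [corner]; positivity

lemma corner_add_inv_pow_le_one (hM : 0 < M) (w : List (Fin (M ^ d))) (k : Fin d) :
    corner d M lab w k + ((M : ℝ) ^ w.length)⁻¹ ≤ 1 := by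
  have hM' : (0 : ℝ) < M := by exact_mod_cast hM
  induction w with
  | nil => simp [corner]
  | cons a w ih =>
    have hlab : (lab a k : ℝ) + 1 ≤ M := by exact_mod_cast (lab a k).is_lt
    rw [corner, List.length_cons, pow_succ, mul_inv, ← div_eq_mul_inv, ← add_div,
      div_le_one hM']
    linarith

lemma cube_eq_Icc (w : List (Fin (M ^ d))) :
    cube d M lab w =
      Icc (corner d M lab w) (corner d M lab w + fun _ => ((M : ℝ) ^ w.length)⁻¹) := by
  ext x
  simp [cube, Pi.le_def, forall_and]

lemma isClosed_cube (w : List (Fin (M ^ d))) : IsClosed (cube d M lab w) := by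
  rw [cube_eq_Icc]; exact isClosed_Icc

lemma corner_mem_cube (w : List (Fin (M ^ d))) : corner d M lab w ∈ cube d M lab w :=
  fun _ => ⟨le_rfl, le_add_of_nonneg_right (by positivity)⟩

lemma cube_subset_of_prefix (hM : 0 < M) {u v : List (Fin (M ^ d))} (h : u <+: v) :
    cube d M lab v ⊆ cube d M lab u := by
  obtain ⟨t, rfl⟩ := h
  intro x hx k
  obtain ⟨hx₁, hx₂⟩ := hx k
  have ht₀ := corner_nonneg (lab := lab) t k
  have ht₁ := corner_add_inv_pow_le_one (lab := lab) hM t k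
  have hr : (0 : ℝ) ≤ ((M : ℝ) ^ u.length)⁻¹ := by positivity
  simp only [corner_append, hQ, List.length_append, pow_add, mul_inv] at hx₁ hx₂
  constructor <;> nlinarith

lemma dist_le_of_mem_cube {w : List (Fin (M ^ d))} {x y : Fin d → ℝ}
    (hx : x ∈ cube d M lab w) (hy : y ∈ cube d M lab w) :
    dist x y ≤ ((M : ℝ) ^ w.length)⁻¹ := by
  refine (dist_pi_le_iff (by positivity)).2 fun k => ?_
  rw [Real.dist_eq, abs_sub_le_iff]
  constructor <;> linarith [hx k, hy k]

lemma abs_corner_sub_le (hM : 0 < M) {u v : List (Fin (M ^ d))} (hlen : u.length = v.length)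
    (k : Fin d) :
    |corner d M lab u k - corner d M lab v k| ≤ 1 - ((M : ℝ) ^ u.length)⁻¹ := by
  have hu := corner_add_inv_pow_le_one (lab := lab) hM u k
  have hv := corner_add_inv_pow_le_one (lab := lab) hM v k
  rw [← hlen] at hv
  rw [abs_sub_le_iff]
  constructor <;> linarith [corner_nonneg (lab := lab) u k, corner_nonneg (lab := lab) v k]

lemma exists_inv_pow_le_abs_corner_sub (hM : 0 < M) (hinj : Function.Injective lab) :
    ∀ {u v : List (Fin (M ^ d))}, u.length = v.length → u ≠ v →
      ∃ k, ((M : ℝ) ^ u.length)⁻¹ ≤ |corner d M lab u k - corner d M lab v k|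
  | [], [], _, h => absurd rfl h
  | a :: u, b :: v, hlen, hne => by
    have hM' : (0 : ℝ) < M := by exact_mod_cast hM
    have hlen' : u.length = v.length := by simpa using hlen
    have hsplit : ∀ k, corner d M lab (a :: u) k - corner d M lab (b :: v) k =
        (((lab a k : ℝ) - lab b k) + (corner d M lab u k - corner d M lab v k)) / M :=
      fun k => by simp only [corner]; ring
    simp only [hsplit, abs_div, abs_of_pos hM', List.length_cons, pow_succ, mul_inv,
      ← div_eq_mul_inv, div_le_div_iff_of_pos_right hM']
    by_cases hab : a = b
    · subst hab
      obtain ⟨k, hk⟩ := exists_inv_pow_le_abs_corner_sub hM hinj hlen' (by simpa using hne)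
      exact ⟨k, by simpa using hk⟩
    · obtain ⟨k, hk⟩ : ∃ k, lab a k ≠ lab b k := Function.ne_iff.1 (hinj.ne hab)
      have hlab : (1 : ℝ) ≤ |(lab a k : ℝ) - lab b k| := by
        have hne : ((lab a k : ℕ) : ℤ) - (lab b k : ℕ) ≠ 0 :=
          sub_ne_zero.2 (by exact_mod_cast Fin.val_ne_of_ne hk)
        exact_mod_cast Int.one_le_abs hne
      have hcorner := abs_corner_sub_le (lab := lab) hM hlen' k
      have htri := abs_sub_abs_le_abs_sub ((lab a k : ℝ) - lab b k)
        (-(corner d M lab u k - corner d M lab v k))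
      rw [sub_neg_eq_add, abs_neg] at htri
      exact ⟨k, by linarith⟩

lemma lab_bounds_of_notMem_LamB (hlab : LabSpec d M lab) {s : Fin (M ^ d)}
    (hs : s ∉ LamB d M) (k : Fin d) : 1 ≤ (lab s k : ℕ) ∧ (lab s k : ℕ) + 2 ≤ M := by
  have hlt := (lab s k).is_lt
  have hmid : ¬ ((lab s k : ℕ) = 0 ∨ (lab s k : ℕ) = M - 1) := fun h => hs ((hlab.2 s).2 ⟨k, h⟩)
  omega

lemma inner_bounds_of_mem_cube_append (hM : 0 < M) (hlab : LabSpec d M lab)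
    {u : List (Fin (M ^ d))} {s : Fin (M ^ d)} (hs : s ∉ LamB d M) {x : Fin d → ℝ}
    (hx : x ∈ cube d M lab (u ++ [s])) (k : Fin d) :
    corner d M lab u k + ((M : ℝ) ^ u.length)⁻¹ / M ≤ x k ∧
      x k + ((M : ℝ) ^ u.length)⁻¹ / M ≤ corner d M lab u k + ((M : ℝ) ^ u.length)⁻¹ := by
  have hM' : (0 : ℝ) < M := by exact_mod_cast hM
  obtain ⟨hs₁, hs₂⟩ := lab_bounds_of_notMem_LamB hlab hs k
  have hs₁' : (1 : ℝ) ≤ lab s k := by exact_mod_cast hs₁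
  have hs₂' : (lab s k : ℝ) + 2 ≤ M := by exact_mod_cast hs₂
  obtain ⟨hx₁, hx₂⟩ := hx k
  simp only [corner_append, hQ, corner, List.length_append, List.length_singleton, pow_succ,
    mul_inv, add_zero] at hx₁ hx₂
  have hr : 0 < ((M : ℝ) ^ u.length)⁻¹ := by positivity
  have hm : (M : ℝ) * (M : ℝ)⁻¹ = 1 := mul_inv_cancel₀ hM'.ne'
  rw [div_eq_mul_inv] at hx₁ hx₂ ⊢
  constructor <;> nlinarith [mul_pos hr (inv_pos.2 hM')]

lemma inv_pow_div_le_dist (hM : 0 < M) (hlab : LabSpec d M lab) {u v : List (Fin (M ^ d))}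
    (hlen : u.length = v.length) (huv : u ≠ v) {s : Fin (M ^ d)} (hs : s ∉ LamB d M)
    {x y : Fin d → ℝ} (hx : x ∈ cube d M lab (u ++ [s])) (hy : y ∈ cube d M lab v) :
    ((M : ℝ) ^ u.length)⁻¹ / M ≤ dist x y := by
  obtain ⟨k, hk⟩ := exists_inv_pow_le_abs_corner_sub hM hlab.1.injective hlen huv
  obtain ⟨hx₁, hx₂⟩ := inner_bounds_of_mem_cube_append hM hlab hs hx k
  obtain ⟨hy₁, hy₂⟩ := hy k
  rw [← hlen] at hy₂
  refine le_trans ?_ (dist_le_pi_dist x y k)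
  rw [Real.dist_eq, le_abs]
  rcases le_abs.1 hk with hk | hk
  · exact Or.inl (by linarith)
  · exact Or.inr (by linarith)

lemma dist_le_mul_dist_of_mem_cube_append (hM : 0 < M) (hlab : LabSpec d M lab)
    {u v : List (Fin (M ^ d))} (hlen : u.length = v.length) (huv : u ≠ v) {s : Fin (M ^ d)}
    (hs : s ∉ LamB d M) {x y x' y' : Fin d → ℝ} (hx : x ∈ cube d M lab (u ++ [s]))
    (hy : y ∈ cube d M lab v) (hx' : x' ∈ cube d M lab u) (hy' : y' ∈ cube d M lab v) :
    dist x' y' ≤ (2 * M + 1) * dist x y := by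
  have hM' : (0 : ℝ) < M := by exact_mod_cast hM
  have hsep := inv_pow_div_le_dist hM hlab hlen huv hs hx hy
  have hx'x := dist_le_of_mem_cube hx' (cube_subset_of_prefix hM (List.prefix_append u [s]) hx)
  have hyy' := dist_le_of_mem_cube hy hy'
  rw [← hlen] at hyy'
  have hr : ((M : ℝ) ^ u.length)⁻¹ = M * (((M : ℝ) ^ u.length)⁻¹ / M) := by field_simp
  calc dist x' y' ≤ dist x' x + dist x y + dist y y' := dist_triangle4 _ _ _ _
    _ ≤ (2 * M + 1) * dist x y := by nlinarith

def IsPrefixChain (g : ℕ → List (Fin (M ^ d))) : Prop := ∀ N, g N <+: g (N + 1)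

lemma IsPrefixChain.prefix {g : ℕ → List (Fin (M ^ d))} (hg : IsPrefixChain g) {m N : ℕ}
    (h : m ≤ N) : g m <+: g N :=
  Nat.rel_of_forall_rel_succ_of_le (· <+: ·) hg h

lemma isPrefixChain_wordTake (i : ℕ → Fin (M ^ d)) : IsPrefixChain (wordTake d M i) :=
  fun N => ⟨[i N], (wordTake_succ i N).symm⟩

lemma IsPrefixChain.cons {g : ℕ → List (Fin (M ^ d))} (hg : IsPrefixChain g) (a : Fin (M ^ d)) :
    IsPrefixChain fun N => a :: g N :=
  fun N => List.cons_prefix_cons.2 ⟨rfl, hg N⟩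

variable (lab) in
/-- `PiInf d M lab i` and `PiTilde d M lab X e ω i` are, by definition, the `chainPoint`s of
`wordTake d M i` and of the substituted words `substW d M X e ω (wordTake d M i N)`. -/
def chainPoint (g : ℕ → List (Fin (M ^ d))) : Fin d → ℝ :=
  fun k => ⨆ N, corner d M lab (g N) k

lemma tendsto_corner_chainPoint (hM : 0 < M) {g : ℕ → List (Fin (M ^ d))}
    (hg : IsPrefixChain g) :
    Tendsto (fun N => corner d M lab (g N)) atTop (𝓝 (chainPoint lab g)) := by
  refine tendsto_pi_nhds.2 fun k => tendsto_atTop_ciSup (fun m N h => ?_) ⟨1, ?_⟩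
  · have hr : (0 : ℝ) ≤ ((M : ℝ) ^ (g m).length)⁻¹ := by positivity
    obtain ⟨t, ht⟩ := hg.prefix h
    rw [← ht, corner_append]
    exact le_add_of_nonneg_right (mul_nonneg hr (corner_nonneg t k))
  · rintro _ ⟨N, rfl⟩
    linarith [corner_add_inv_pow_le_one (lab := lab) hM (g N) k,
      inv_nonneg.2 (pow_nonneg (Nat.cast_nonneg (α := ℝ) M) (g N).length)]

lemma chainPoint_mem_cube (hM : 0 < M) {g : ℕ → List (Fin (M ^ d))} (hg : IsPrefixChain g)
    (m : ℕ) : chainPoint lab g ∈ cube d M lab (g m) :=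
  (isClosed_cube _).mem_of_tendsto (tendsto_corner_chainPoint hM hg)
    (eventually_atTop.2 ⟨m, fun _ hN =>
      cube_subset_of_prefix hM (hg.prefix hN) (corner_mem_cube _)⟩)

lemma chainPoint_eq_hQ (hM : 0 < M) {g h : ℕ → List (Fin (M ^ d))} (hg : IsPrefixChain g)
    (hh : IsPrefixChain h) {P : List (Fin (M ^ d))} {m : ℕ} (hgh : ∀ N, g (m + N) = P ++ h N) :
    chainPoint lab g = hQ d M lab P (chainPoint lab h) := by
  have hshift := (tendsto_add_atTop_iff_nat m).2 (tendsto_corner_chainPoint (lab := lab) hM hg)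
  simp_rw [add_comm _ m, hgh, corner_append] at hshift
  exact tendsto_nhds_unique hshift
    (((continuous_hQ P).tendsto _).comp (tendsto_corner_chainPoint hM hh))

section Substitution

variable {Ω : Type*} {X : List (Fin (M ^ d)) → Ω → Bool} {e : List (Fin (M ^ d))} {ω : Ω}

lemma substAux_append (pfx l₁ l₂ : List (Fin (M ^ d))) :
    substAux d M X e ω pfx (l₁ ++ l₂) =
      substAux d M X e ω pfx l₁ ++ substAux d M X e ω (pfx ++ l₁) l₂ := by
  induction l₁ generalizing pfx with
  | nil => simp [substAux]
  | cons a l₁ ih => simp [substAux, ih]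

lemma substAux_singleton (pfx : List (Fin (M ^ d))) (a : Fin (M ^ d)) :
    substAux d M X e ω pfx [a] = (if BdryDead d M X ω pfx then e else []) ++ [a] := by
  by_cases h : BdryDead d M X ω pfx <;> simp [substAux, h]

lemma isPrefixChain_substAux (pfx : List (Fin (M ^ d))) (i : ℕ → Fin (M ^ d)) :
    IsPrefixChain fun N => substAux d M X e ω pfx (wordTake d M i N) :=
  fun N => ⟨_, by beta_reduce; rw [wordTake_succ, substAux_append]⟩

lemma substAux_wordTake_succ (i : ℕ → Fin (M ^ d)) (n N : ℕ) :
    substAux d M X e ω (wordTake d M i n) (wordTake d M (shiftW d M n i) (N + 1)) =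
      substAux d M X e ω (wordTake d M i n) (wordTake d M (shiftW d M n i) N) ++
        ((if BdryDead d M X ω (wordTake d M i (n + N)) then e else []) ++ [i (n + N)]) := by
  rw [wordTake_succ, substAux_append, ← wordTake_add, substAux_singleton]
  rfl

lemma substAux_wordTake_of_not_bdryDead {i : ℕ → Fin (M ^ d)} {n N : ℕ}
    (h : ∀ m < N, ¬ BdryDead d M X ω (wordTake d M i (n + m))) :
    substAux d M X e ω (wordTake d M i n) (wordTake d M (shiftW d M n i) N) =
      wordTake d M (shiftW d M n i) N := by
  induction N with
  | zero => rfl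
  | succ N ih =>
    rw [substAux_wordTake_succ, if_neg (h N N.lt_succ_self),
      ih fun m hm => h m (hm.trans N.lt_succ_self), List.nil_append, wordTake_succ]
    rfl

lemma notMem_LamB_of_bdryDead {i : ℕ → Fin (M ^ d)} (hi : TInf d M X ω i) {m : ℕ}
    (hB : BdryDead d M X ω (wordTake d M i m)) : i m ∉ LamB d M :=
  fun hm => hB (i m) hm (wordTake_succ i m ▸ hi (m + 1))

variable (X e ω) in
/-- The substituted tail of `𝚒` after `𝚒|_n`, with the substitution at level `n` itself
suppressed, so that it starts with the letter `i n`. -/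
def tailChain (n : ℕ) (i : ℕ → Fin (M ^ d)) (N : ℕ) : List (Fin (M ^ d)) :=
  i n :: substAux d M X e ω (wordTake d M i (n + 1)) (wordTake d M (shiftW d M (n + 1) i) N)

variable (lab X e ω) in
def tailPoint (n : ℕ) (i : ℕ → Fin (M ^ d)) : Fin d → ℝ :=
  chainPoint lab (tailChain X e ω n i)

lemma isPrefixChain_tailChain (n : ℕ) (i : ℕ → Fin (M ^ d)) :
    IsPrefixChain (tailChain X e ω n i) :=
  (isPrefixChain_substAux _ _).cons _

lemma substAux_wordTake_one_add (i : ℕ → Fin (M ^ d)) (n N : ℕ) :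
    substAux d M X e ω (wordTake d M i n) (wordTake d M (shiftW d M n i) (1 + N)) =
      (if BdryDead d M X ω (wordTake d M i n) then e else []) ++ tailChain X e ω n i N := by
  rw [add_comm, wordTake_shiftW_succ, ← List.singleton_append, substAux_append, ← wordTake_succ,
    substAux_singleton, List.append_assoc]
  rfl

lemma tailChain_of_not_bdryDead {i : ℕ → Fin (M ^ d)} {n N : ℕ}
    (h : ∀ m < N, ¬ BdryDead d M X ω (wordTake d M i (n + 1 + m))) :
    tailChain X e ω n i N = wordTake d M (shiftW d M n i) (N + 1) := by
  rw [tailChain, substAux_wordTake_of_not_bdryDead h, wordTake_shiftW_succ]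

lemma tailChain_succ_of_bdryDead {i : ℕ → Fin (M ^ d)} {n N : ℕ}
    (h : ∀ m < N, ¬ BdryDead d M X ω (wordTake d M i (n + 1 + m)))
    (hB : BdryDead d M X ω (wordTake d M i (n + 1 + N))) :
    tailChain X e ω n i (N + 1) =
      wordTake d M (shiftW d M n i) (N + 1) ++ (e ++ [i (n + 1 + N)]) := by
  rw [tailChain, substAux_wordTake_succ, if_pos hB, substAux_wordTake_of_not_bdryDead h,
    wordTake_shiftW_succ, List.cons_append]

end Substitution

lemma inv_mul_le_and_le_mul_of_comparable {r t c T S D : ℝ} (hr : 0 ≤ r) (hc : 0 < c)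
    (hT : 1 ≤ T) (htT : T⁻¹ ≤ t) (ht : t ≤ 1) (hD : 0 ≤ D) (hDS : D ≤ c * S)
    (hSD : S ≤ c * D) :
    (c * T)⁻¹ * (r * S) ≤ r * (t * D) ∧ r * (t * D) ≤ c * T * (r * S) := by
  have hS : 0 ≤ S := (mul_nonneg_iff_of_pos_left hc).1 (hD.trans hDS)
  have hT₀ : 0 < T := zero_lt_one.trans_le hT
  constructor
  · calc (c * T)⁻¹ * (r * S) = r * (T⁻¹ * (c⁻¹ * S)) := by rw [mul_inv]; ring
      _ ≤ r * (t * D) := mul_le_mul_of_nonneg_left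
          (mul_le_mul htT ((inv_mul_le_iff₀ hc).2 hSD) (by positivity)
            ((inv_pos.2 hT₀).le.trans htT)) hr
  · calc r * (t * D) ≤ r * (1 * (c * T * S)) := mul_le_mul_of_nonneg_left
          (mul_le_mul ht (hDS.trans (by nlinarith [mul_nonneg hc.le hS])) hD zero_le_one) hr
      _ = c * T * (r * S) := by ring

section Comparison

variable {Ω : Type*} {X : List (Fin (M ^ d)) → Ω → Bool} {e : List (Fin (M ^ d))} {ω : Ω}

lemma piInf_eq_hQ (hM : 0 < M) (i : ℕ → Fin (M ^ d)) (n : ℕ) :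
    PiInf d M lab i = hQ d M lab (wordTake d M i n) (PiInf d M lab (shiftW d M n i)) :=
  chainPoint_eq_hQ hM (isPrefixChain_wordTake i) (isPrefixChain_wordTake _) (wordTake_add i n)

lemma piTilde_eq_hQ (hM : 0 < M) (i : ℕ → Fin (M ^ d)) (n : ℕ) :
    PiTilde d M lab X e ω i = hQ d M lab (substW d M X e ω (wordTake d M i n))
      (hQ d M lab (if BdryDead d M X ω (wordTake d M i n) then e else [])
        (tailPoint lab X e ω n i)) := by
  have hsplit : ∀ N, substW d M X e ω (wordTake d M i (n + N)) =
      substW d M X e ω (wordTake d M i n) ++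
        substAux d M X e ω (wordTake d M i n) (wordTake d M (shiftW d M n i) N) := fun N => by
    rw [wordTake_add, substW, substAux_append, List.nil_append]; rfl
  rw [tailPoint, ← chainPoint_eq_hQ hM (isPrefixChain_substAux _ _) (isPrefixChain_tailChain n i)
    (substAux_wordTake_one_add i n)]
  exact chainPoint_eq_hQ hM (isPrefixChain_substAux [] i) (isPrefixChain_substAux _ _) hsplit

lemma tailPoint_of_not_bdryDead (hM : 0 < M) {i : ℕ → Fin (M ^ d)} {n : ℕ}
    (h : ∀ m, ¬ BdryDead d M X ω (wordTake d M i (n + 1 + m))) :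
    tailPoint lab X e ω n i = PiInf d M lab (shiftW d M n i) := by
  have hsplit : ∀ N, wordTake d M (shiftW d M n i) (1 + N) = [] ++ tailChain X e ω n i N :=
    fun N => by rw [add_comm, List.nil_append, tailChain_of_not_bdryDead fun m _ => h m]
  have h := chainPoint_eq_hQ (lab := lab) hM (isPrefixChain_wordTake _)
    (isPrefixChain_tailChain n i) hsplit
  rw [hQ_nil] at h
  exact h.symm

lemma dist_tailPoint_comparable_of_bdryDead (hM : 0 < M) (hlab : LabSpec d M lab)
    {a : Fin (M ^ d)} {l : List (Fin (M ^ d))} (ha : a ∉ LamB d M)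
    {i j : ℕ → Fin (M ^ d)} {n q : ℕ} (hi : TInf d M X ω i)
    (hne : i n ≠ j n) (hq : BdryDead d M X ω (wordTake d M i (n + 1 + q)))
    (hi' : ∀ m < q, ¬ BdryDead d M X ω (wordTake d M i (n + 1 + m)))
    (hj' : ∀ m < q, ¬ BdryDead d M X ω (wordTake d M j (n + 1 + m))) :
    dist (tailPoint lab X (a :: l) ω n i) (tailPoint lab X (a :: l) ω n j) ≤
        (2 * M + 1) * dist (PiInf d M lab (shiftW d M n i)) (PiInf d M lab (shiftW d M n j)) ∧
      dist (PiInf d M lab (shiftW d M n i)) (PiInf d M lab (shiftW d M n j)) ≤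
        (2 * M + 1) * dist (tailPoint lab X (a :: l) ω n i) (tailPoint lab X (a :: l) ω n j) := by
  set u := wordTake d M (shiftW d M n i) (q + 1)
  set v := wordTake d M (shiftW d M n j) (q + 1)
  have hlen : u.length = v.length := by simp only [u, v, length_wordTake]
  have huv : u ≠ v := fun h => by
    simp only [u, v, wordTake_shiftW_succ] at h
    exact hne (List.cons.inj h).1
  have hs : i (n + 1 + q) ∉ LamB d M := notMem_LamB_of_bdryDead hi hq
  have hx : PiInf d M lab (shiftW d M n i) ∈ cube d M lab (u ++ [i (n + 1 + q)]) := by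
    have hmem := chainPoint_mem_cube (lab := lab) hM (isPrefixChain_wordTake (shiftW d M n i))
      (q + 1 + 1)
    rwa [wordTake_succ, show shiftW d M n i (q + 1) = i (n + 1 + q) from
      congrArg i (by omega)] at hmem
  have hA : tailPoint lab X (a :: l) ω n i ∈ cube d M lab (u ++ [a]) := by
    have hmem := chainPoint_mem_cube (lab := lab) hM
      (isPrefixChain_tailChain (X := X) (e := a :: l) (ω := ω) n i) (q + 1)
    rw [tailChain_succ_of_bdryDead hi' hq] at hmem
    exact cube_subset_of_prefix hM ⟨l ++ [i (n + 1 + q)], by simp [u]⟩ hmem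
  have hy : PiInf d M lab (shiftW d M n j) ∈ cube d M lab v :=
    chainPoint_mem_cube hM (isPrefixChain_wordTake _) (q + 1)
  have hB : tailPoint lab X (a :: l) ω n j ∈ cube d M lab v := by
    have hmem := chainPoint_mem_cube (lab := lab) hM
      (isPrefixChain_tailChain (X := X) (e := a :: l) (ω := ω) n j) q
    rwa [tailChain_of_not_bdryDead hj'] at hmem
  have hu : ∀ {z : Fin d → ℝ} {s : Fin (M ^ d)}, z ∈ cube d M lab (u ++ [s]) →
      z ∈ cube d M lab u := fun hz => cube_subset_of_prefix hM (List.prefix_append _ _) hz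
  exact ⟨dist_le_mul_dist_of_mem_cube_append hM hlab hlen huv hs hx hy (hu hA) hB,
    dist_le_mul_dist_of_mem_cube_append hM hlab hlen huv ha hA hB (hu hx) hy⟩

lemma dist_tailPoint_comparable (hM : 0 < M) (hlab : LabSpec d M lab)
    {a : Fin (M ^ d)} {l : List (Fin (M ^ d))} (ha : a ∉ LamB d M)
    {i j : ℕ → Fin (M ^ d)} {n : ℕ} (hi : TInf d M X ω i)
    (hj : TInf d M X ω j) (hne : i n ≠ j n) :
    dist (tailPoint lab X (a :: l) ω n i) (tailPoint lab X (a :: l) ω n j) ≤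
        (2 * M + 1) * dist (PiInf d M lab (shiftW d M n i)) (PiInf d M lab (shiftW d M n j)) ∧
      dist (PiInf d M lab (shiftW d M n i)) (PiInf d M lab (shiftW d M n j)) ≤
        (2 * M + 1) * dist (tailPoint lab X (a :: l) ω n i) (tailPoint lab X (a :: l) ω n j) := by
  by_cases hex : ∃ q, BdryDead d M X ω (wordTake d M i (n + 1 + q)) ∨
      BdryDead d M X ω (wordTake d M j (n + 1 + q))
  · have hmin := fun m (hm : m < Nat.find hex) => not_or.1 (Nat.find_min hex hm)
    rcases Nat.find_spec hex with hq | hq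
    · exact dist_tailPoint_comparable_of_bdryDead hM hlab ha hi hne hq
        (fun m hm => (hmin m hm).1) (fun m hm => (hmin m hm).2)
    · rw [dist_comm (tailPoint lab X (a :: l) ω n i), dist_comm (PiInf d M lab (shiftW d M n i))]
      exact (dist_tailPoint_comparable_of_bdryDead hM hlab ha hj hne.symm hq
        (fun m hm => (hmin m hm).2) (fun m hm => (hmin m hm).1))
  · simp only [not_exists, not_or] at hex
    rw [tailPoint_of_not_bdryDead hM fun m => (hex m).1,
      tailPoint_of_not_bdryDead hM fun m => (hex m).2]
    have hc : (1 : ℝ) ≤ 2 * M + 1 := by linarith [Nat.cast_nonneg (α := ℝ) M]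
    exact ⟨le_mul_of_one_le_left dist_nonneg hc, le_mul_of_one_le_left dist_nonneg hc⟩

lemma zpow_sub_mul_dist_piInf (hM : 0 < M) {i j : ℕ → Fin (M ^ d)} {n : ℕ}
    (hij : wordTake d M i n = wordTake d M j n) (L : ℕ) :
    (M : ℝ) ^ ((n : ℤ) - (L : ℤ)) * dist (PiInf d M lab i) (PiInf d M lab j) =
      ((M : ℝ) ^ L)⁻¹ * dist (PiInf d M lab (shiftW d M n i)) (PiInf d M lab (shiftW d M n j)) := by
  rw [piInf_eq_hQ hM i n, piInf_eq_hQ hM j n, ← hij, dist_hQ, length_wordTake,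
    zpow_sub₀ (by positivity), zpow_natCast, zpow_natCast]
  field_simp

lemma dist_piTilde_eq (hM : 0 < M) {i j : ℕ → Fin (M ^ d)} {n : ℕ}
    (hij : wordTake d M i n = wordTake d M j n) :
    dist (PiTilde d M lab X e ω i) (PiTilde d M lab X e ω j) =
      ((M : ℝ) ^ (substW d M X e ω (wordTake d M i n)).length)⁻¹ *
        (((M : ℝ) ^ (if BdryDead d M X ω (wordTake d M i n) then e else []).length)⁻¹ *
          dist (tailPoint lab X e ω n i) (tailPoint lab X e ω n j)) := by
  rw [piTilde_eq_hQ hM i n, piTilde_eq_hQ hM j n, ← hij, dist_hQ, dist_hQ]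

end Comparison

theorem statement7_general
    (d M : ℕ) (hM : 3 ≤ M)
    (lab : Fin (M ^ d) → Fin d → Fin M) (hlab : LabSpec d M lab)
    (K : ℕ) :
    ∃ C : ℝ, 1 ≤ C ∧
      ∀ (e : List (Fin (M ^ d))), EtaSpec d M K e →
        ∀ (Ω : Type*) (X : List (Fin (M ^ d)) → Ω → Bool) (ω : Ω)
          (i j : ℕ → Fin (M ^ d)), TInf d M X ω i → TInf d M X ω j →
          ∀ n : ℕ, wordTake d M i n = wordTake d M j n → i n ≠ j n →
            C⁻¹ * ((M : ℝ) ^ ((n : ℤ) - ((substW d M X e ω (wordTake d M i n)).length : ℤ)) *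
                dist (PiInf d M lab i) (PiInf d M lab j)) ≤
                dist (PiTilde d M lab X e ω i) (PiTilde d M lab X e ω j) ∧
              dist (PiTilde d M lab X e ω i) (PiTilde d M lab X e ω j) ≤
                C * ((M : ℝ) ^ ((n : ℤ) - ((substW d M X e ω (wordTake d M i n)).length : ℤ)) *
                dist (PiInf d M lab i) (PiInf d M lab j)) ∧
              ((M : ℝ) ^ ((substW d M X e ω (wordTake d M i n)).length))⁻¹ *
                  dist (PiInf d M lab (shiftW d M n i)) (PiInf d M lab (shiftW d M n j)) =
                (M : ℝ) ^ ((n : ℤ) - ((substW d M X e ω (wordTake d M i n)).length : ℤ)) *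
                dist (PiInf d M lab i) (PiInf d M lab j) := by
  have hM₀ : 0 < M := by omega
  have hMK : (1 : ℝ) ≤ (M : ℝ) ^ K := one_le_pow₀ (by exact_mod_cast hM₀)
  refine ⟨(2 * M + 1) * M ^ K, one_le_mul_of_one_le_of_one_le (by linarith) hMK,
    fun e he Ω X ω i j hi hj n hij hne => ?_⟩
  obtain ⟨-, heK, a, l, rfl, ha⟩ := he
  have hsubst : ((M : ℝ) ^ K)⁻¹ ≤
      ((M : ℝ) ^ (if BdryDead d M X ω (wordTake d M i n) then a :: l else []).length)⁻¹ ∧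
      ((M : ℝ) ^ (if BdryDead d M X ω (wordTake d M i n) then a :: l else []).length)⁻¹ ≤ 1 := by
    split_ifs <;> simp [heK, inv_le_one_of_one_le₀ hMK]
  obtain ⟨hDS, hSD⟩ := dist_tailPoint_comparable (l := l) hM₀ hlab ha hi hj hne
  rw [zpow_sub_mul_dist_piInf hM₀ hij, dist_piTilde_eq hM₀ hij]
  obtain ⟨hlower, hupper⟩ := inv_mul_le_and_le_mul_of_comparable
    (r := ((M : ℝ) ^ (substW d M X (a :: l) ω (wordTake d M i n)).length)⁻¹) (by positivity)
    (by positivity) hMK hsubst.1 hsubst.2 dist_nonneg hDS hSD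
  exact ⟨hlower, hupper, rfl⟩

theorem statement7
    (d M : ℕ) (hd : 1 ≤ d) (hM : 3 ≤ M)
    (lab : Fin (M ^ d) → Fin d → Fin M) (hlab : LabSpec d M lab)
    (K : ℕ) :
    ∃ C : ℝ, 1 ≤ C ∧
      ∀ (e : List (Fin (M ^ d))), EtaSpec d M K e →
        ∀ (Ω : Type*) (X : List (Fin (M ^ d)) → Ω → Bool) (ω : Ω)
          (i j : ℕ → Fin (M ^ d)), TInf d M X ω i → TInf d M X ω j →
          ∀ n : ℕ, wordTake d M i n = wordTake d M j n → i n ≠ j n →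
            C⁻¹ * ((M : ℝ) ^ ((n : ℤ) - ((substW d M X e ω (wordTake d M i n)).length : ℤ)) *
                dist (PiInf d M lab i) (PiInf d M lab j)) ≤
                dist (PiTilde d M lab X e ω i) (PiTilde d M lab X e ω j) ∧
              dist (PiTilde d M lab X e ω i) (PiTilde d M lab X e ω j) ≤
                C * ((M : ℝ) ^ ((n : ℤ) - ((substW d M X e ω (wordTake d M i n)).length : ℤ)) *
                dist (PiInf d M lab i) (PiInf d M lab j)) ∧
              ((M : ℝ) ^ ((substW d M X e ω (wordTake d M i n)).length))⁻¹ *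
                  dist (PiInf d M lab (shiftW d M n i)) (PiInf d M lab (shiftW d M n j)) =
                (M : ℝ) ^ ((n : ℤ) - ((substW d M X e ω (wordTake d M i n)).length : ℤ)) *
                dist (PiInf d M lab i) (PiInf d M lab j) :=
  statement7_general d M hM lab hlab K

end FractalPercolation
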